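/- arXiv:1803.00998 — 3 statements merged into one kernel-verified Lean document; each statement's English description precedes it below -/
import Mathlib

section
/- Let j1, j2, j0, m be natural numbers with m ≥ 1 and j1 + j2 ≥ j0 + m. Then the function f : ℝ² → ℝ defined by f(c1, c2) = c1^{j1} · c2^{j2} / ‖(c1,c2)‖^{j0} for (c1,c2) ≠ 0 and f(0,0) = 0 is of class C^{m−1} on ℝ². -/
/-!
Write `g j1 j2 j0 c = c.1 ^ j1 * c.2 ^ j2 / |c| ^ j0`, homogeneous of degree `j1 + j2 - j0`
(`|c|` the Euclidean norm; `‖c‖` below is the sup norm of `ℝ × ℝ`, which is all the estimates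
need). Away from the origin `g` is smooth, with partial derivatives
`∂₁ g j1 j2 j0 = j1 • g (j1 - 1) j2 j0 - j0 • g (j1 + 1) j2 (j0 + 2)`
and symmetrically for `∂₂`: functions of the same kind, of degree one lower. At the origin,
`|g c| ≤ ‖c‖ ^ (j1 + j2 - j0)` makes `g` continuous when the degree is positive and
differentiable with derivative `0` when it is at least `2`. By induction on `k`, `g` is `C^k` as
soon as its degree exceeds `k`.
-/

open Asymptotics ContinuousLinearMap

noncomputable def monomialDivNorm (j1 j2 j0 : ℕ) (c : ℝ × ℝ) : ℝ :=
  if c = 0 then 0 else c.1 ^ j1 * c.2 ^ j2 / √(c.1 ^ 2 + c.2 ^ 2) ^ j0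

-- The truncated `j1 - 1` and `j2 - 1` are harmless: they only occur with coefficient `0`.
noncomputable def monomialDivNormFDeriv (j1 j2 j0 : ℕ) (c : ℝ × ℝ) :
    ℝ × ℝ →L[ℝ] ℝ :=
  (j1 * monomialDivNorm (j1 - 1) j2 j0 c - j0 * monomialDivNorm (j1 + 1) j2 (j0 + 2) c) •
      fst ℝ ℝ ℝ +
    (j2 * monomialDivNorm j1 (j2 - 1) j0 c - j0 * monomialDivNorm j1 (j2 + 1) (j0 + 2) c) •
      snd ℝ ℝ ℝ

lemma norm_le_sqrt_fst_sq_add_snd_sq (c : ℝ × ℝ) : ‖c‖ ≤ √(c.1 ^ 2 + c.2 ^ 2) :=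
  max_le (Real.abs_le_sqrt (le_add_of_nonneg_right (sq_nonneg _)))
    (Real.abs_le_sqrt (le_add_of_nonneg_left (sq_nonneg _)))

lemma sqrt_fst_sq_add_snd_sq_pos {c : ℝ × ℝ} (hc : c ≠ 0) : 0 < √(c.1 ^ 2 + c.2 ^ 2) :=
  (norm_pos_iff.mpr hc).trans_le (norm_le_sqrt_fst_sq_add_snd_sq c)

lemma monomialDivNorm_zero (j1 j2 j0 : ℕ) : monomialDivNorm j1 j2 j0 0 = 0 := if_pos rfl

lemma monomialDivNorm_eventuallyEq {j1 j2 j0 : ℕ} {c : ℝ × ℝ} (hc : c ≠ 0) :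
    monomialDivNorm j1 j2 j0 =ᶠ[nhds c]
      fun x => x.1 ^ j1 * x.2 ^ j2 / √(x.1 ^ 2 + x.2 ^ 2) ^ j0 := by
  filter_upwards [isOpen_compl_singleton.mem_nhds hc] with x hx
  exact if_neg hx

lemma norm_monomialDivNorm_le {j1 j2 j0 : ℕ} (h : j0 ≤ j1 + j2) (c : ℝ × ℝ) :
    ‖monomialDivNorm j1 j2 j0 c‖ ≤ ‖c‖ ^ (j1 + j2 - j0) := by
  rcases eq_or_ne c 0 with rfl | hc
  · simp [monomialDivNorm_zero]
  have hc0 : 0 < ‖c‖ := norm_pos_iff.mpr hc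
  calc ‖monomialDivNorm j1 j2 j0 c‖
      = ‖c.1‖ ^ j1 * ‖c.2‖ ^ j2 / √(c.1 ^ 2 + c.2 ^ 2) ^ j0 := by
        rw [monomialDivNorm, if_neg hc, norm_div, norm_mul, norm_pow, norm_pow, norm_pow,
          Real.norm_of_nonneg (Real.sqrt_nonneg _)]
    _ ≤ ‖c‖ ^ j1 * ‖c‖ ^ j2 / ‖c‖ ^ j0 := by
        gcongr
        exacts [norm_fst_le c, norm_snd_le c, norm_le_sqrt_fst_sq_add_snd_sq c]
    _ = ‖c‖ ^ (j1 + j2 - j0) := by rw [← pow_add, pow_sub₀ _ hc0.ne' h, div_eq_mul_inv]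

lemma continuous_monomialDivNorm {j1 j2 j0 : ℕ} (h : j0 < j1 + j2) :
    Continuous (monomialDivNorm j1 j2 j0) := by
  refine continuous_iff_continuousAt.mpr fun c => ?_
  rcases eq_or_ne c 0 with rfl | hc
  · rw [ContinuousAt, monomialDivNorm_zero]
    refine squeeze_zero_norm (norm_monomialDivNorm_le h.le) ?_
    have : Continuous fun x : ℝ × ℝ => ‖x‖ ^ (j1 + j2 - j0) := by fun_prop
    simpa [zero_pow (Nat.sub_ne_zero_of_lt h)] using this.tendsto 0
  · refine ContinuousAt.congr ?_ (monomialDivNorm_eventuallyEq hc).symm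
    exact ContinuousAt.div (by fun_prop) (by fun_prop)
      (pow_ne_zero _ (sqrt_fst_sq_add_snd_sq_pos hc).ne')

lemma hasFDerivAt_monomialDivNorm_zero {j1 j2 j0 : ℕ} (h : j0 + 1 < j1 + j2) :
    HasFDerivAt (monomialDivNorm j1 j2 j0) (0 : ℝ × ℝ →L[ℝ] ℝ) 0 := by
  refine IsBigO.hasFDerivAt (n := j1 + j2 - j0) ?_ (by omega)
  refine IsBigO.of_bound 1 (Filter.Eventually.of_forall fun x => ?_)
  simpa using norm_monomialDivNorm_le (by omega) x

lemma hasFDerivAt_monomialDivNorm_of_ne_zero (j1 j2 j0 : ℕ) {c : ℝ × ℝ} (hc : c ≠ 0) :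
    HasFDerivAt (monomialDivNorm j1 j2 j0) (monomialDivNormFDeriv j1 j2 j0 c) c := by
  have hr := sqrt_fst_sq_add_snd_sq_pos hc
  have hq : c.1 ^ 2 + c.2 ^ 2 ≠ 0 := (Real.sqrt_pos.mp hr).ne'
  have h1 : HasFDerivAt (fun x : ℝ × ℝ => x.1) (fst ℝ ℝ ℝ) c := hasFDerivAt_fst
  have h2 : HasFDerivAt (fun x : ℝ × ℝ => x.2) (snd ℝ ℝ ℝ) c := hasFDerivAt_snd
  have hnum := (h1.pow j1).mul (h2.pow j2)
  have hden := (((h1.pow 2).add (h2.pow 2)).sqrt hq).pow j0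
  have hquot : HasFDerivAt
      (fun x : ℝ × ℝ => x.1 ^ j1 * x.2 ^ j2 * (√(x.1 ^ 2 + x.2 ^ 2) ^ j0)⁻¹) _ c :=
    hnum.mul ((hasDerivAt_inv (pow_ne_zero j0 hr.ne')).comp_hasFDerivAt c hden)
  refine (hquot.congr_of_eventuallyEq ?_).congr_fderiv ?_
  · simpa only [div_eq_mul_inv] using monomialDivNorm_eventuallyEq hc
  refine ContinuousLinearMap.ext fun v => ?_
  simp only [monomialDivNormFDeriv, monomialDivNorm, if_neg hc, add_apply, smul_apply, coe_fst',
    coe_snd', Pi.mul_apply, Pi.add_apply, smul_eq_mul, nsmul_eq_mul]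
  rcases j0 with _ | n
  · simp only [pow_zero, inv_one, CharP.cast_eq_zero, zero_mul, mul_zero, zero_add, div_one,
      sub_zero]
    ring
  · field_simp
    simp only [Nat.cast_add, Nat.cast_one, Nat.cast_ofNat, Nat.add_one_sub_one, pow_one]
    ring

lemma monomialDivNormFDeriv_zero (j1 j2 j0 : ℕ) : monomialDivNormFDeriv j1 j2 j0 0 = 0 := by
  simp [monomialDivNormFDeriv, monomialDivNorm_zero]

lemma hasFDerivAt_monomialDivNorm {j1 j2 j0 : ℕ} (h : j0 + 1 < j1 + j2) (c : ℝ × ℝ) :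
    HasFDerivAt (monomialDivNorm j1 j2 j0) (monomialDivNormFDeriv j1 j2 j0 c) c := by
  rcases eq_or_ne c 0 with rfl | hc
  · simpa only [monomialDivNormFDeriv_zero] using hasFDerivAt_monomialDivNorm_zero h
  · exact hasFDerivAt_monomialDivNorm_of_ne_zero j1 j2 j0 hc

lemma contDiff_monomialDivNorm (k : ℕ) {j1 j2 j0 : ℕ} (h : j0 + k < j1 + j2) :
    ContDiff ℝ k (monomialDivNorm j1 j2 j0) := by
  induction k generalizing j1 j2 j0 with
  | zero => exact contDiff_zero.mpr (continuous_monomialDivNorm (by omega))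
  | succ k ih =>
    have hf := hasFDerivAt_monomialDivNorm (by omega : j0 + 1 < j1 + j2)
    rw [Nat.cast_succ, contDiff_succ_iff_fderiv]
    refine ⟨fun c => (hf c).differentiableAt, by simp, ?_⟩
    rw [show fderiv ℝ (monomialDivNorm j1 j2 j0) = monomialDivNormFDeriv j1 j2 j0 from
      funext fun c => (hf c).fderiv]
    have := ih (j1 := j1 - 1) (j2 := j2) (j0 := j0) (by omega)
    have := ih (j1 := j1 + 1) (j2 := j2) (j0 := j0 + 2) (by omega)
    have := ih (j1 := j1) (j2 := j2 - 1) (j0 := j0) (by omega)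
    have := ih (j1 := j1) (j2 := j2 + 1) (j0 := j0 + 2) (by omega)
    unfold monomialDivNormFDeriv
    fun_prop

/-- For natural numbers `j1, j2, j0, m` with `m ≥ 1` and
`j1 + j2 ≥ j0 + m`, the function `f : ℝ² → ℝ` given by
`f (c1, c2) = c1^j1 * c2^j2 / ‖(c1, c2)‖^j0` (Euclidean norm) away from the
origin, and `f 0 = 0`, is of class `C^(m-1)` on all of `ℝ²`. -/
theorem statement0 (j1 j2 j0 m : ℕ) (hm : 1 ≤ m) (hj : j0 + m ≤ j1 + j2) :
    ContDiff ℝ ((m - 1 : ℕ) : ℕ∞)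
      (fun c : ℝ × ℝ =>
        if c = 0 then 0
        else c.1 ^ j1 * c.2 ^ j2 / (Real.sqrt (c.1 ^ 2 + c.2 ^ 2)) ^ j0) :=
  contDiff_monomialDivNorm (m - 1) (by omega)
end

section
/- Let m ≥ 0 be a natural number, let U be an open neighborhood of 0 in ℝ², and for each pair (j1, j2) of natural numbers with j1 + j2 = m let g_{(j1,j2)} : U → ℝ be a smooth (C^∞) function. Define g(c) = Σ_{j1+j2=m} g_{(j1,j2)}(c) · c1^{j1} · c2^{j2}. Then the function c ↦ g(c) · ln‖c‖, defined for c ∈ U, c ≠ 0, extends to a C^m function on some open neighborhood of 0 in ℝ² if and only if g_{(j1,j2)}(0) = 0 for every pair (j1,j2) with j1 + j2 = m. -/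
open Real Filter Set

noncomputable section


/-- squared Euclidean norm -/
def sq2 (c : ℝ × ℝ) : ℝ := c.1 ^ 2 + c.2 ^ 2

lemma sq2_pos {c : ℝ × ℝ} (hc : c ≠ 0) : 0 < sq2 c := by
  have h1 : c.1 ≠ 0 ∨ c.2 ≠ 0 := by
    by_contra h2
    push_neg at h2
    exact hc (Prod.ext h2.1 h2.2)
  have a1 := sq_nonneg c.1
  have a2 := sq_nonneg c.2
  rcases h1 with h1 | h1
  · have := pow_pos (abs_pos.2 h1) 2
    simp only [sq_abs] at this
    unfold sq2; nlinarith
  · have := pow_pos (abs_pos.2 h1) 2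
    simp only [sq_abs] at this
    unfold sq2; nlinarith

lemma continuous_sq2 : Continuous sq2 := by
  unfold sq2; fun_prop

lemma abs_fst_le_sqrt (c : ℝ × ℝ) : |c.1| ≤ Real.sqrt (sq2 c) := by
  rw [show |c.1| = Real.sqrt (c.1 ^ 2) by rw [Real.sqrt_sq_eq_abs]]
  exact Real.sqrt_le_sqrt (by unfold sq2; nlinarith [sq_nonneg c.2])

lemma abs_snd_le_sqrt (c : ℝ × ℝ) : |c.2| ≤ Real.sqrt (sq2 c) := by
  rw [show |c.2| = Real.sqrt (c.2 ^ 2) by rw [Real.sqrt_sq_eq_abs]]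
  exact Real.sqrt_le_sqrt (by unfold sq2; nlinarith [sq_nonneg c.1])

lemma norm_le_sqrt (c : ℝ × ℝ) : ‖c‖ ≤ Real.sqrt (sq2 c) := by
  rw [Prod.norm_def]
  exact max_le (by simpa [Real.norm_eq_abs] using abs_fst_le_sqrt c)
    (by simpa [Real.norm_eq_abs] using abs_snd_le_sqrt c)

lemma sqrt_le_two_norm (c : ℝ × ℝ) : Real.sqrt (sq2 c) ≤ 2 * ‖c‖ := by
  have h1 : sq2 c ≤ (2 * ‖c‖) ^ 2 := by
    have hf : |c.1| ≤ ‖c‖ := by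
      simpa [Real.norm_eq_abs] using norm_fst_le c
    have hs : |c.2| ≤ ‖c‖ := by
      simpa [Real.norm_eq_abs] using norm_snd_le c
    have h1 : c.1 ^ 2 ≤ ‖c‖ ^ 2 := by
      rw [← sq_abs]; exact pow_le_pow_left₀ (abs_nonneg _) hf 2
    have h2 : c.2 ^ 2 ≤ ‖c‖ ^ 2 := by
      rw [← sq_abs]; exact pow_le_pow_left₀ (abs_nonneg _) hs 2
    unfold sq2; nlinarith [norm_nonneg c]
  calc Real.sqrt (sq2 c) ≤ Real.sqrt ((2 * ‖c‖) ^ 2) := Real.sqrt_le_sqrt h1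
  _ = 2 * ‖c‖ := Real.sqrt_sq (by positivity)

lemma clm_decomp (T : ℝ × ℝ →L[ℝ] ℝ) (v : ℝ × ℝ) :
    T v = v.1 * T (1, 0) + v.2 * T (0, 1) := by
  have h : v = v.1 • ((1, 0) : ℝ × ℝ) + v.2 • ((0, 1) : ℝ × ℝ) := by
    ext <;> simp
  conv_lhs => rw [h]
  rw [map_add, map_smul, map_smul, smul_eq_mul, smul_eq_mul]


/-- the singular model function -/
def msf (a b k ε : ℕ) (φ : ℝ × ℝ → ℝ) (c : ℝ × ℝ) : ℝ :=
  φ c * c.1 ^ a * c.2 ^ b * Real.log (sq2 c) ^ ε / sq2 c ^ k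

/-- x-partial derivative coefficient -/
def msfDx (a b k ε : ℕ) (φ : ℝ × ℝ → ℝ) (T : ℝ × ℝ →L[ℝ] ℝ) (c : ℝ × ℝ) : ℝ :=
  T (1, 0) * c.1 ^ a * c.2 ^ b * Real.log (sq2 c) ^ ε / sq2 c ^ k
  + (a : ℝ) * (φ c * c.1 ^ (a - 1) * c.2 ^ b * Real.log (sq2 c) ^ ε / sq2 c ^ k)
  + 2 * (ε : ℝ) * (φ c * c.1 ^ (a + 1) * c.2 ^ b * Real.log (sq2 c) ^ (ε - 1) / sq2 c ^ (k + 1))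
  - 2 * (k : ℝ) * (φ c * c.1 ^ (a + 1) * c.2 ^ b * Real.log (sq2 c) ^ ε / sq2 c ^ (k + 1))

def msfDy (a b k ε : ℕ) (φ : ℝ × ℝ → ℝ) (T : ℝ × ℝ →L[ℝ] ℝ) (c : ℝ × ℝ) : ℝ :=
  T (0, 1) * c.1 ^ a * c.2 ^ b * Real.log (sq2 c) ^ ε / sq2 c ^ k
  + (b : ℝ) * (φ c * c.1 ^ a * c.2 ^ (b - 1) * Real.log (sq2 c) ^ ε / sq2 c ^ k)
  + 2 * (ε : ℝ) * (φ c * c.1 ^ a * c.2 ^ (b + 1) * Real.log (sq2 c) ^ (ε - 1) / sq2 c ^ (k + 1))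
  - 2 * (k : ℝ) * (φ c * c.1 ^ a * c.2 ^ (b + 1) * Real.log (sq2 c) ^ ε / sq2 c ^ (k + 1))

lemma msf_hasFDerivAt (a b k ε : ℕ) (φ : ℝ × ℝ → ℝ) (T : ℝ × ℝ →L[ℝ] ℝ) (c : ℝ × ℝ)
    (hc : c ≠ 0) (hφ : HasFDerivAt φ T c) :
    HasFDerivAt (msf a b k ε φ)
      (msfDx a b k ε φ T c • ContinuousLinearMap.fst ℝ ℝ ℝ
        + msfDy a b k ε φ T c • ContinuousLinearMap.snd ℝ ℝ ℝ) c := by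
  have hN : sq2 c ≠ 0 := (sq2_pos hc).ne'
  have hNk : (sq2 c) ^ k ≠ 0 := pow_ne_zero _ hN
  have hx1 : HasFDerivAt (fun c : ℝ × ℝ => c.1 ^ 2)
      ((((2 : ℕ) : ℝ) * c.1 ^ (2 - 1)) • ContinuousLinearMap.fst ℝ ℝ ℝ) c :=
    (hasDerivAt_pow 2 c.1).comp_hasFDerivAt c hasFDerivAt_fst
  have hy1 : HasFDerivAt (fun c : ℝ × ℝ => c.2 ^ 2)
      ((((2 : ℕ) : ℝ) * c.2 ^ (2 - 1)) • ContinuousLinearMap.snd ℝ ℝ ℝ) c :=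
    (hasDerivAt_pow 2 c.2).comp_hasFDerivAt c hasFDerivAt_snd
  have hsq2 : HasFDerivAt sq2
      ((((2 : ℕ) : ℝ) * c.1 ^ (2 - 1)) • ContinuousLinearMap.fst ℝ ℝ ℝ
        + (((2 : ℕ) : ℝ) * c.2 ^ (2 - 1)) • ContinuousLinearMap.snd ℝ ℝ ℝ) c := hx1.add hy1
  have hlog : HasFDerivAt (fun c => Real.log (sq2 c)) ((sq2 c)⁻¹ • _) c :=
    (Real.hasDerivAt_log hN).comp_hasFDerivAt c hsq2
  have hlogε : HasFDerivAt (fun c => Real.log (sq2 c) ^ ε)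
      (((ε : ℝ) * Real.log (sq2 c) ^ (ε - 1)) • _) c :=
    (hasDerivAt_pow ε _).comp_hasFDerivAt c hlog
  have hxa : HasFDerivAt (fun c : ℝ × ℝ => c.1 ^ a)
      (((a : ℝ) * c.1 ^ (a - 1)) • ContinuousLinearMap.fst ℝ ℝ ℝ) c :=
    (hasDerivAt_pow a c.1).comp_hasFDerivAt c hasFDerivAt_fst
  have hyb : HasFDerivAt (fun c : ℝ × ℝ => c.2 ^ b)
      (((b : ℝ) * c.2 ^ (b - 1)) • ContinuousLinearMap.snd ℝ ℝ ℝ) c :=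
    (hasDerivAt_pow b c.2).comp_hasFDerivAt c hasFDerivAt_snd
  have hNkf : HasFDerivAt (fun c => (sq2 c) ^ k) (((k : ℝ) * (sq2 c) ^ (k - 1)) • _) c :=
    (hasDerivAt_pow k _).comp_hasFDerivAt c hsq2
  have hinv : HasFDerivAt (fun c => ((sq2 c) ^ k)⁻¹) ((-(((sq2 c) ^ k) ^ 2)⁻¹) • _) c :=
    (hasDerivAt_inv hNk).comp_hasFDerivAt c hNkf
  have hraw := (((hφ.mul hxa).mul hyb).mul hlogε).mul hinv
  have : msf a b k ε φ = fun c => (((φ c * c.1 ^ a) * c.2 ^ b) * Real.log (sq2 c) ^ ε)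
      * ((sq2 c) ^ k)⁻¹ := by
    funext c; rw [msf, div_eq_mul_inv]
  rw [this]
  refine HasFDerivAt.congr_fderiv hraw (Eq.symm ?_)
  refine ContinuousLinearMap.ext fun v => ?_
  obtain ⟨u, w⟩ := v
  simp only [ContinuousLinearMap.add_apply, ContinuousLinearMap.coe_smul', Pi.smul_apply,
    ContinuousLinearMap.coe_fst', ContinuousLinearMap.coe_snd', smul_eq_mul, msfDx, msfDy,
    ContinuousLinearMap.neg_apply, Pi.mul_apply]
  rw [clm_decomp T (u, w)]
  rcases k with _ | k'
  · simp only [pow_zero, Nat.cast_zero, Nat.zero_sub, pow_succ, Nat.cast_ofNat]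
    field_simp
    ring
  · simp only [Nat.cast_succ, Nat.succ_sub_one, pow_succ, Nat.cast_ofNat]
    field_simp
    ring


/-- the controlling bound function -/
def bnd (t : ℝ) : ℝ := t + 2 * |t * Real.log t|

lemma bnd_nonneg {t : ℝ} (ht : 0 ≤ t) : 0 ≤ bnd t := by
  unfold bnd; positivity

lemma bnd_continuous : Continuous bnd :=
  continuous_id.add (continuous_const.mul Real.continuous_mul_log.abs)

lemma bnd_zero : bnd 0 = 0 := by simp [bnd]

lemma msf_zero {a b k ε : ℕ} {φ : ℝ × ℝ → ℝ} (hab : 1 ≤ a + b ∨ φ 0 = 0) :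
    msf a b k ε φ 0 = 0 := by
  rcases hab with hab | hab
  · rcases Nat.eq_zero_or_pos a with ha | ha
    · have hb : b ≠ 0 := by omega
      simp [msf, ha, zero_pow hb]
    · simp [msf, zero_pow ha.ne']
  · simp [msf, hab]

lemma msf_bound {a b k ε : ℕ} {φ : ℝ × ℝ → ℝ} (hk : 2 * k ≤ a + b) (c : ℝ × ℝ) (hc : c ≠ 0) :
    |msf a b k ε φ c| ≤
      |φ c| * Real.sqrt (sq2 c) ^ (a + b - 2 * k) * |Real.log (sq2 c)| ^ ε := by
  set s := Real.sqrt (sq2 c) with hs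
  have hspos : 0 < s := Real.sqrt_pos.2 (sq2_pos hc)
  have hNs : sq2 c = s ^ 2 := (Real.sq_sqrt (sq2_pos hc).le).symm
  have h1 : |msf a b k ε φ c| = |φ c| * |c.1| ^ a * |c.2| ^ b * |Real.log (sq2 c)| ^ ε / s ^ (2 * k) := by
    rw [msf, abs_div, abs_mul, abs_mul, abs_mul, abs_pow, abs_pow, abs_pow, abs_pow]
    congr 1
    rw [hNs, abs_of_nonneg (by positivity : (0:ℝ) ≤ s ^ 2), ← pow_mul]
  rw [h1]
  have h2 : |φ c| * |c.1| ^ a * |c.2| ^ b * |Real.log (sq2 c)| ^ ε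
      ≤ |φ c| * s ^ a * s ^ b * |Real.log (sq2 c)| ^ ε := by
    gcongr <;> [skip; skip] <;> first
      | exact abs_fst_le_sqrt c
      | exact abs_snd_le_sqrt c
  calc |φ c| * |c.1| ^ a * |c.2| ^ b * |Real.log (sq2 c)| ^ ε / s ^ (2 * k)
      ≤ |φ c| * s ^ a * s ^ b * |Real.log (sq2 c)| ^ ε / s ^ (2 * k) := by
        gcongr
    _ = |φ c| * s ^ (a + b - 2 * k) * |Real.log (sq2 c)| ^ ε := by
        have : s ^ a * s ^ b = s ^ (a + b - 2 * k) * s ^ (2 * k) := by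
          rw [← pow_add, ← pow_add]; congr 1; omega
        rw [mul_assoc (|φ c|), this]
        field_simp


lemma tendsto_sqrt_sq2 : Tendsto (fun c => Real.sqrt (sq2 c)) (nhds (0 : ℝ × ℝ)) (nhds 0) := by
  have h : Continuous fun c => Real.sqrt (sq2 c) := Real.continuous_sqrt.comp continuous_sq2
  have : Real.sqrt (sq2 0) = 0 := by simp [sq2]
  simpa [this] using h.tendsto 0

/-- the eventual bound near `0` -/
lemma msf_evb {a b k ε v : ℕ} {n : ℕ} {U : Set (ℝ × ℝ)} {φ : ℝ × ℝ → ℝ}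
    (hU : IsOpen U) (h0 : (0 : ℝ × ℝ) ∈ U) (hε : ε ≤ 1) (hv : v ≤ 1)
    (hn : 1 ≤ n) (harith : n + 2 * k ≤ v + a + b)
    (hφ : ContDiffOn ℝ (⊤ : ℕ∞) φ U) (hv1 : v = 1 → φ 0 = 0) :
    ∃ C > 0, ∀ᶠ c in nhds (0 : ℝ × ℝ),
      |msf a b k ε φ c| ≤ C * Real.sqrt (sq2 c) ^ (n - 1) * bnd (Real.sqrt (sq2 c)) := by
  have hUn : U ∈ nhds (0 : ℝ × ℝ) := hU.mem_nhds h0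
  -- bound for φ
  obtain ⟨C, hC, hφb⟩ : ∃ C > 0, ∀ᶠ c in nhds (0 : ℝ × ℝ),
      |φ c| ≤ C * Real.sqrt (sq2 c) ^ v := by
    interval_cases v
    · -- v = 0 : boundedness from continuity
      have hcont : ContinuousAt φ 0 := by
        have := (hφ.continuousOn).continuousAt hUn
        exact this
      refine ⟨|φ 0| + 1, by positivity, ?_⟩
      have h1 : ∀ᶠ c in nhds (0 : ℝ × ℝ), φ c ∈ Metric.ball (φ 0) 1 :=
        hcont (Metric.ball_mem_nhds _ one_pos)
      filter_upwards [h1] with c hc1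
      rw [Metric.mem_ball, Real.dist_eq] at hc1
      have := abs_sub_abs_le_abs_sub (φ c) (φ 0)
      simp only [pow_zero, mul_one]
      linarith
    · -- v = 1 : O(‖c‖) from differentiability
      have hdiff : DifferentiableAt ℝ φ 0 :=
        (hφ.differentiableOn (by simp)).differentiableAt hUn
      have hO := hdiff.isBigO_sub
      rw [Asymptotics.isBigO_iff] at hO
      obtain ⟨C, hCb⟩ := hO
      refine ⟨max C 1, lt_of_lt_of_le one_pos (le_max_right _ _), ?_⟩
      filter_upwards [hCb] with c hc1
      have h2 : |φ c| ≤ C * ‖c‖ := by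
        simpa [hv1 rfl, Real.norm_eq_abs] using hc1
      have h3 : C * ‖c‖ ≤ max C 1 * Real.sqrt (sq2 c) := by
        have := norm_le_sqrt c
        have hs0 : (0:ℝ) ≤ Real.sqrt (sq2 c) := Real.sqrt_nonneg _
        have : C * ‖c‖ ≤ max C 1 * ‖c‖ :=
          mul_le_mul_of_nonneg_right (le_max_left _ _) (norm_nonneg _)
        calc C * ‖c‖ ≤ max C 1 * ‖c‖ := this
          _ ≤ max C 1 * Real.sqrt (sq2 c) := by
              have h1 : (0:ℝ) < max C 1 := lt_of_lt_of_le one_pos (le_max_right _ _)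
              exact mul_le_mul_of_nonneg_left (norm_le_sqrt c) h1.le
      simpa [pow_one] using h2.trans h3
  refine ⟨C, hC, ?_⟩
  have hs1 : ∀ᶠ c in nhds (0 : ℝ × ℝ), Real.sqrt (sq2 c) < 1 :=
    tendsto_sqrt_sq2.eventually_lt_const one_pos
  filter_upwards [hφb, hs1] with c hφc hsc
  have hz : 1 ≤ a + b ∨ φ 0 = 0 := by
    rcases Nat.eq_zero_or_pos (a + b) with h | h
    · right; exact hv1 (by omega)
    · left; exact h
  by_cases hc : c = 0
  · subst hc
    simp only [msf_zero hz, abs_zero]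
    have : Real.sqrt (sq2 0) = 0 := by simp [sq2]
    rw [this, bnd_zero]
    simp
  · set s := Real.sqrt (sq2 c) with hsdef
    have hspos : 0 < s := Real.sqrt_pos.2 (sq2_pos hc)
    have hb1 := msf_bound (ε := ε) (φ := φ) (by omega : 2 * k ≤ a + b) c hc
    have key1 : |φ c| * s ^ (a + b - 2 * k) * |Real.log (sq2 c)| ^ ε
        ≤ C * s ^ (v + (a + b - 2 * k)) * |Real.log (sq2 c)| ^ ε := by
      rw [pow_add]
      calc |φ c| * s ^ (a + b - 2 * k) * |Real.log (sq2 c)| ^ ε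
          ≤ (C * s ^ v) * s ^ (a + b - 2 * k) * |Real.log (sq2 c)| ^ ε := by gcongr
        _ = C * (s ^ v * s ^ (a + b - 2 * k)) * |Real.log (sq2 c)| ^ ε := by ring
    have key2 : s ^ (v + (a + b - 2 * k)) ≤ s ^ n :=
      pow_le_pow_of_le_one hspos.le hsc.le (by omega)
    have key3 : s ^ n * |Real.log (sq2 c)| ^ ε ≤ s ^ (n - 1) * bnd s := by
      have hsn : s ^ n = s ^ (n - 1) * s := by
        rw [← pow_succ]; congr 1; omega
      have hsl : s * |Real.log (sq2 c)| ^ ε ≤ bnd s := by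
        have hNs : sq2 c = s ^ 2 := (Real.sq_sqrt (sq2_pos hc).le).symm
        interval_cases ε
        · simp only [pow_zero, mul_one, bnd]
          nlinarith [abs_nonneg (s * Real.log s)]
        · rw [pow_one, hNs, Real.log_pow]
          have heq : s * |((2:ℕ):ℝ) * Real.log s| = 2 * |s * Real.log s| := by
            rw [abs_mul, abs_mul, abs_of_nonneg hspos.le]
            push_cast
            rw [abs_of_nonneg (by norm_num : (0:ℝ) ≤ 2)]
            ring
          rw [heq]
          unfold bnd
          linarith [hspos.le]
      rw [hsn, mul_assoc]
      exact mul_le_mul_of_nonneg_left hsl (pow_nonneg hspos.le _)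
    calc |msf a b k ε φ c| ≤ |φ c| * s ^ (a + b - 2 * k) * |Real.log (sq2 c)| ^ ε := hb1
      _ ≤ C * s ^ (v + (a + b - 2 * k)) * |Real.log (sq2 c)| ^ ε := key1
      _ = C * (s ^ (v + (a + b - 2 * k)) * |Real.log (sq2 c)| ^ ε) := by ring
      _ ≤ C * (s ^ n * |Real.log (sq2 c)| ^ ε) := by gcongr
      _ ≤ C * (s ^ (n - 1) * bnd s) := by gcongr
      _ = C * s ^ (n - 1) * bnd s := by ring


lemma tendsto_bnd_sqrt : Tendsto (fun c => bnd (Real.sqrt (sq2 c))) (nhds (0 : ℝ × ℝ)) (nhds 0) := by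
  have := (bnd_continuous.tendsto 0).comp tendsto_sqrt_sq2
  simpa [bnd_zero, Function.comp_def] using this

/-- continuity of `msf` at the origin -/
lemma msf_cont_zero {a b k ε v : ℕ} {U : Set (ℝ × ℝ)} {φ : ℝ × ℝ → ℝ}
    (hU : IsOpen U) (h0 : (0 : ℝ × ℝ) ∈ U) (hε : ε ≤ 1) (hv : v ≤ 1)
    (harith : 1 + 2 * k ≤ v + a + b)
    (hφ : ContDiffOn ℝ (⊤ : ℕ∞) φ U) (hv1 : v = 1 → φ 0 = 0) :
    ContinuousAt (msf a b k ε φ) 0 := by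
  obtain ⟨C, hC, hev⟩ := msf_evb (n := 1) hU h0 hε hv le_rfl harith hφ hv1
  have hz : msf a b k ε φ 0 = 0 := by
    apply msf_zero
    rcases Nat.eq_zero_or_pos (a + b) with h | h
    · right; exact hv1 (by omega)
    · left; exact h
  rw [ContinuousAt, hz]
  apply squeeze_zero_norm' (a := fun c => C * Real.sqrt (sq2 c) ^ (1 - 1) * bnd (Real.sqrt (sq2 c)))
  · filter_upwards [hev] with c hc
    simpa [Real.norm_eq_abs] using hc
  · have : Tendsto (fun c => C * Real.sqrt (sq2 c) ^ (1-1) * bnd (Real.sqrt (sq2 c)))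
        (nhds (0:ℝ×ℝ)) (nhds (C * 1 * 0)) := by
      simp only [Nat.sub_self, pow_zero]
      exact (tendsto_const_nhds.mul tendsto_const_nhds).mul tendsto_bnd_sqrt
    simpa using this

/-- derivative of `msf` at the origin is `0` when the total order is at least 2 -/
lemma msf_deriv_zero {a b k ε v : ℕ} {U : Set (ℝ × ℝ)} {φ : ℝ × ℝ → ℝ}
    (hU : IsOpen U) (h0 : (0 : ℝ × ℝ) ∈ U) (hε : ε ≤ 1) (hv : v ≤ 1)
    (harith : 2 + 2 * k ≤ v + a + b)
    (hφ : ContDiffOn ℝ (⊤ : ℕ∞) φ U) (hv1 : v = 1 → φ 0 = 0) :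
    HasFDerivAt (msf a b k ε φ) (0 : ℝ × ℝ →L[ℝ] ℝ) 0 := by
  obtain ⟨C, hC, hev⟩ := msf_evb (n := 2) hU h0 hε hv (by omega) harith hφ hv1
  have hz : msf a b k ε φ 0 = 0 := msf_zero (Or.inl (by omega))
  rw [hasFDerivAt_iff_isLittleO_nhds_zero]
  simp only [zero_add, hz, ContinuousLinearMap.zero_apply, sub_zero]
  rw [Asymptotics.isLittleO_iff]
  intro e he
  have h1 : Tendsto (fun c => 2 * C * bnd (Real.sqrt (sq2 c))) (nhds (0:ℝ×ℝ)) (nhds 0) := by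
    simpa using tendsto_bnd_sqrt.const_mul (2 * C)
  filter_upwards [hev, h1.eventually_lt_const he] with c h2 h3
  have hs0 : (0:ℝ) ≤ Real.sqrt (sq2 c) := Real.sqrt_nonneg _
  have hbnd0 : 0 ≤ bnd (Real.sqrt (sq2 c)) := bnd_nonneg hs0
  calc ‖msf a b k ε φ c‖ = |msf a b k ε φ c| := rfl
    _ ≤ C * Real.sqrt (sq2 c) ^ (2 - 1) * bnd (Real.sqrt (sq2 c)) := h2
    _ = C * bnd (Real.sqrt (sq2 c)) * Real.sqrt (sq2 c) := by ring_nf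
    _ ≤ C * bnd (Real.sqrt (sq2 c)) * (2 * ‖c‖) := by
        have := sqrt_le_two_norm c
        gcongr
    _ = 2 * C * bnd (Real.sqrt (sq2 c)) * ‖c‖ := by ring
    _ ≤ e * ‖c‖ := by
        have := h3.le
        gcongr


lemma msf_contAt {a b k ε : ℕ} {φ : ℝ × ℝ → ℝ} {c : ℝ × ℝ} (hc : c ≠ 0)
    (hφc : ContinuousAt φ c) : ContinuousAt (msf a b k ε φ) c := by
  have hN : sq2 c ≠ 0 := (sq2_pos hc).ne'
  unfold msf
  refine ContinuousAt.div ?_ ((continuous_sq2.pow k).continuousAt) (pow_ne_zero _ hN)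
  refine ((hφc.mul (by fun_prop)).mul (by fun_prop)).mul ?_
  exact ((Real.continuousAt_log hN).comp continuous_sq2.continuousAt).pow ε

lemma msfDx_zero {a b k ε v : ℕ} {φ : ℝ × ℝ → ℝ} (T : ℝ × ℝ →L[ℝ] ℝ)
    (hv : v ≤ 1) (harith : 2 + 2 * k ≤ a + b + v) (hv1 : v = 1 → φ 0 = 0) :
    msfDx a b k ε φ T 0 = 0 := by
  have h0 : sq2 (0 : ℝ × ℝ) = 0 := by simp [sq2]
  have hab : 1 ≤ a + b := by omega
  unfold msfDx
  simp only [h0, Real.log_zero, Prod.fst_zero, Prod.snd_zero]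
  have t34 : (0 : ℝ) ^ (a + 1) = 0 := zero_pow (by omega)
  rw [t34]
  have t1 : T (1, 0) * (0:ℝ) ^ a * (0:ℝ) ^ b * (0:ℝ) ^ ε / (0:ℝ) ^ k = 0 := by
    rcases Nat.eq_zero_or_pos a with ha | ha
    · have hb : b ≠ 0 := by omega
      rw [zero_pow hb]; ring
    · rw [zero_pow ha.ne']; ring
  rw [t1]
  have t2 : (a : ℝ) * (φ 0 * (0:ℝ) ^ (a - 1) * (0:ℝ) ^ b * (0:ℝ) ^ ε / (0:ℝ) ^ k) = 0 := by
    match a, harith with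
    | 0, _ => simp
    | 1, h =>
      rcases Nat.eq_zero_or_pos b with hb | hb
      · have hφ0 : φ 0 = 0 := hv1 (by omega)
        rw [hφ0]; ring
      · rw [zero_pow hb.ne']; ring
    | (n + 2), _ =>
      rw [zero_pow (by omega : n + 2 - 1 ≠ 0)]; ring
  rw [t2]
  ring

lemma msfDy_zero {a b k ε v : ℕ} {φ : ℝ × ℝ → ℝ} (T : ℝ × ℝ →L[ℝ] ℝ)
    (hv : v ≤ 1) (harith : 2 + 2 * k ≤ a + b + v) (hv1 : v = 1 → φ 0 = 0) :
    msfDy a b k ε φ T 0 = 0 := by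
  have h0 : sq2 (0 : ℝ × ℝ) = 0 := by simp [sq2]
  unfold msfDy
  simp only [h0, Real.log_zero, Prod.fst_zero, Prod.snd_zero]
  have t34 : (0 : ℝ) ^ (b + 1) = 0 := zero_pow (by omega)
  rw [t34]
  have t1 : T (0, 1) * (0:ℝ) ^ a * (0:ℝ) ^ b * (0:ℝ) ^ ε / (0:ℝ) ^ k = 0 := by
    rcases Nat.eq_zero_or_pos a with ha | ha
    · have hb : b ≠ 0 := by omega
      rw [zero_pow hb]; ring
    · rw [zero_pow ha.ne']; ring
  rw [t1]
  have t2 : (b : ℝ) * (φ 0 * (0:ℝ) ^ a * (0:ℝ) ^ (b - 1) * (0:ℝ) ^ ε / (0:ℝ) ^ k) = 0 := by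
    match b, harith with
    | 0, _ => simp
    | 1, h =>
      rcases Nat.eq_zero_or_pos a with ha | ha
      · have hφ0 : φ 0 = 0 := hv1 (by omega)
        rw [hφ0]; ring
      · rw [zero_pow ha.ne']; ring
    | (n + 2), _ =>
      rw [zero_pow (by omega : n + 2 - 1 ≠ 0)]; ring
  rw [t2]
  ring

/-- The key inductive lemma. -/
lemma key (μ : ℕ) : ∀ (a b k ε v : ℕ) (U : Set (ℝ × ℝ)) (φ : ℝ × ℝ → ℝ),
    IsOpen U → (0 : ℝ × ℝ) ∈ U → ε ≤ 1 → v ≤ 1 → μ + 2 * k + 1 ≤ a + b + v →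
    ContDiffOn ℝ (⊤ : ℕ∞) φ U → (v = 1 → φ 0 = 0) →
    ContDiffOn ℝ (μ : ℕ∞) (msf a b k ε φ) U := by
  induction μ with
  | zero =>
    intro a b k ε v U φ hU h0 hε hv harith hφ hv1
    refine (contDiffOn_zero.mpr ?_).of_le (by simp)
    intro c hc
    by_cases h : c = 0
    · subst h
      exact (msf_cont_zero hU h0 hε hv (by omega) hφ hv1).continuousWithinAt
    · exact (msf_contAt h ((hφ.continuousOn).continuousAt (hU.mem_nhds hc))).continuousWithinAt
  | succ μ IH =>
    intro a b k ε v U φ hU h0 hε hv harith hφ hv1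
    set D : ℝ × ℝ → (ℝ × ℝ →L[ℝ] ℝ) := fun c =>
      msfDx a b k ε φ (fderiv ℝ φ c) c • ContinuousLinearMap.fst ℝ ℝ ℝ
      + msfDy a b k ε φ (fderiv ℝ φ c) c • ContinuousLinearMap.snd ℝ ℝ ℝ with hD
    have hder : ∀ c ∈ U, HasFDerivAt (msf a b k ε φ) (D c) c := by
      intro c hc
      by_cases h : c = 0
      · subst h
        have h2 : D 0 = 0 := by
          rw [hD]
          simp only
          rw [msfDx_zero _ hv (by omega) hv1, msfDy_zero _ hv (by omega) hv1]
          simp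
        rw [h2]
        exact msf_deriv_zero hU h0 hε hv (by omega) hφ hv1
      · exact msf_hasFDerivAt a b k ε φ _ c h
          ((hφ.differentiableOn (by simp)).differentiableAt
            (hU.mem_nhds hc)).hasFDerivAt
    have hφx : ContDiffOn ℝ (⊤ : ℕ∞) (fun c => (fderiv ℝ φ c) (1, 0)) U :=
      (hφ.fderiv_of_isOpen hU (by simp)).clm_apply contDiffOn_const
    have hφy : ContDiffOn ℝ (⊤ : ℕ∞) (fun c => (fderiv ℝ φ c) (0, 1)) U :=
      (hφ.fderiv_of_isOpen hU (by simp)).clm_apply contDiffOn_const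
    have hDx : ContDiffOn ℝ (μ : ℕ∞) (fun c => msfDx a b k ε φ (fderiv ℝ φ c) c) U := by
      have t1 : ContDiffOn ℝ (μ : ℕ∞) (msf a b k ε (fun c => (fderiv ℝ φ c) (1, 0))) U :=
        IH a b k ε 0 U _ hU h0 hε (by omega) (by omega) hφx
          (by intro h; exact absurd h (by omega))
      have t2 : ContDiffOn ℝ (μ : ℕ∞)
          (fun c => (a : ℝ) * msf (a - 1) b k ε φ c) U := by
        rcases Nat.eq_zero_or_pos a with ha | ha
        · subst ha
          simpa using contDiffOn_const (c := (0:ℝ))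
        · exact contDiffOn_const.mul (IH (a - 1) b k ε v U φ hU h0 hε hv (by omega) hφ hv1)
      have t3 : ContDiffOn ℝ (μ : ℕ∞)
          (fun c => 2 * (ε : ℝ) * msf (a + 1) b (k + 1) (ε - 1) φ c) U :=
        contDiffOn_const.mul (IH (a + 1) b (k + 1) (ε - 1) v U φ hU h0 (by omega) hv
          (by omega) hφ hv1)
      have t4 : ContDiffOn ℝ (μ : ℕ∞)
          (fun c => 2 * (k : ℝ) * msf (a + 1) b (k + 1) ε φ c) U :=
        contDiffOn_const.mul (IH (a + 1) b (k + 1) ε v U φ hU h0 hε hv (by omega) hφ hv1)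
      exact ((t1.add t2).add t3).sub t4
    have hDy : ContDiffOn ℝ (μ : ℕ∞) (fun c => msfDy a b k ε φ (fderiv ℝ φ c) c) U := by
      have t1 : ContDiffOn ℝ (μ : ℕ∞) (msf a b k ε (fun c => (fderiv ℝ φ c) (0, 1))) U :=
        IH a b k ε 0 U _ hU h0 hε (by omega) (by omega) hφy
          (by intro h; exact absurd h (by omega))
      have t2 : ContDiffOn ℝ (μ : ℕ∞)
          (fun c => (b : ℝ) * msf a (b - 1) k ε φ c) U := by
        rcases Nat.eq_zero_or_pos b with hb | hb
        · subst hb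
          simpa using contDiffOn_const (c := (0:ℝ))
        · exact contDiffOn_const.mul (IH a (b - 1) k ε v U φ hU h0 hε hv (by omega) hφ hv1)
      have t3 : ContDiffOn ℝ (μ : ℕ∞)
          (fun c => 2 * (ε : ℝ) * msf a (b + 1) (k + 1) (ε - 1) φ c) U :=
        contDiffOn_const.mul (IH a (b + 1) (k + 1) (ε - 1) v U φ hU h0 (by omega) hv
          (by omega) hφ hv1)
      have t4 : ContDiffOn ℝ (μ : ℕ∞)
          (fun c => 2 * (k : ℝ) * msf a (b + 1) (k + 1) ε φ c) U :=
        contDiffOn_const.mul (IH a (b + 1) (k + 1) ε v U φ hU h0 hε hv (by omega) hφ hv1)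
      exact ((t1.add t2).add t3).sub t4
    have hDcont : ContDiffOn ℝ (μ : ℕ∞) D U :=
      (hDx.smul contDiffOn_const).add (hDy.smul contDiffOn_const)
    have hgoal : ContDiffOn ℝ ((μ : ℕ∞) + 1) (msf a b k ε φ) U := by
      refine (contDiffOn_succ_iff_fderiv_of_isOpen hU).2
        ⟨fun c hc => (hder c hc).differentiableAt.differentiableWithinAt, by simp,
          hDcont.congr fun c hc => (hder c hc).fderiv⟩
    exact hgoal.of_le (by exact_mod_cast le_rfl)


/-- 1-D lemma: if a `C^m` function on an interval around `0` coincides with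
`ψ t * t^m * log t + ρ t * t^m` on the right, then `ψ 0 = 0`. -/
lemma oneD (m : ℕ) : ∀ (δ : ℝ), 0 < δ → ∀ (φ ψ ρ : ℝ → ℝ),
    ContDiffOn ℝ (m : ℕ∞) φ (Ioo (-δ) δ) →
    ContDiffOn ℝ (⊤ : ℕ∞) ψ (Ioo (-δ) δ) → ContDiffOn ℝ (⊤ : ℕ∞) ρ (Ioo (-δ) δ) →
    (∀ t ∈ Ioo (0:ℝ) δ, φ t = ψ t * t ^ m * Real.log t + ρ t * t ^ m) →
    ψ 0 = 0 := by
  induction m with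
  | zero =>
    intro δ hδ φ ψ ρ hφ hψ hρ heq
    by_contra hψ0
    have h0mem : (0:ℝ) ∈ Ioo (-δ) δ := ⟨by linarith, hδ⟩
    set l : Filter ℝ := nhdsWithin 0 (Ioo (0:ℝ) δ) with hl
    have hne : l.NeBot := by
      rw [hl, ← mem_closure_iff_nhdsWithin_neBot, closure_Ioo hδ.ne]
      exact ⟨le_rfl, hδ.le⟩
    have hsub : Ioo (0:ℝ) δ ⊆ Ioo (-δ) δ := fun t ht => ⟨by linarith [ht.1], ht.2⟩
    have hmono : l ≤ nhdsWithin 0 (Ioo (-δ) δ) := nhdsWithin_mono _ hsub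
    have hφt : Tendsto φ l (nhds (φ 0)) :=
      ((hφ.continuousOn.continuousWithinAt h0mem).mono_left hmono)
    have hψt : Tendsto ψ l (nhds (ψ 0)) :=
      ((hψ.continuousOn.continuousWithinAt h0mem).mono_left hmono)
    have hρt : Tendsto ρ l (nhds (ρ 0)) :=
      ((hρ.continuousOn.continuousWithinAt h0mem).mono_left hmono)
    have hev : (fun t => φ t - ρ t) =ᶠ[l] (fun t => ψ t * Real.log t) := by
      filter_upwards [self_mem_nhdsWithin] with t ht
      have := heq t ht
      simp only [pow_zero, mul_one] at this
      rw [this]; ring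
    have hfin : Tendsto (fun t => ψ t * Real.log t) l (nhds (φ 0 - ρ 0)) :=
      (hφt.sub hρt).congr' hev
    have habs : Tendsto (fun t => |ψ t * Real.log t|) l atTop := by
      have h1 : Tendsto (fun t => |ψ t|) l (nhds |ψ 0|) := hψt.abs
      have h2 : Tendsto (fun t => |Real.log t|) l atTop := by
        have := Real.tendsto_log_nhdsGT_zero
        have hmono2 : l ≤ nhdsWithin 0 (Ioi (0:ℝ)) :=
          nhdsWithin_mono _ (fun t ht => ht.1)
        exact tendsto_abs_atBot_atTop.comp (this.mono_left hmono2)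
      have := Tendsto.pos_mul_atTop (abs_pos.2 hψ0) h1 h2
      refine this.congr fun t => (abs_mul _ _).symm
    exact not_tendsto_atTop_of_tendsto_nhds hfin.abs habs
  | succ m IH =>
    intro δ hδ φ ψ ρ hφ hψ hρ heq
    have hop : IsOpen (Ioo (-δ) δ) := isOpen_Ioo
    have hφ' : ContDiffOn ℝ (m : ℕ∞) (deriv φ) (Ioo (-δ) δ) :=
      hφ.deriv_of_isOpen hop (by exact_mod_cast le_rfl)
    have hψ' : ContDiffOn ℝ (⊤ : ℕ∞) (deriv ψ) (Ioo (-δ) δ) :=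
      hψ.deriv_of_isOpen hop (by simp)
    have hρ' : ContDiffOn ℝ (⊤ : ℕ∞) (deriv ρ) (Ioo (-δ) δ) :=
      hρ.deriv_of_isOpen hop (by simp)
    set ψ' : ℝ → ℝ := fun t => t * deriv ψ t + ((m:ℝ) + 1) * ψ t with hψ'def
    set ρ' : ℝ → ℝ := fun t => ψ t + t * deriv ρ t + ((m:ℝ) + 1) * ρ t with hρ'def
    have hψ'c : ContDiffOn ℝ (⊤ : ℕ∞) ψ' (Ioo (-δ) δ) :=
      (contDiffOn_id.mul hψ').add (contDiffOn_const.mul hψ)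
    have hρ'c : ContDiffOn ℝ (⊤ : ℕ∞) ρ' (Ioo (-δ) δ) :=
      (hψ.add (contDiffOn_id.mul hρ')).add (contDiffOn_const.mul hρ)
    have heq' : ∀ t ∈ Ioo (0:ℝ) δ, deriv φ t = ψ' t * t ^ m * Real.log t + ρ' t * t ^ m := by
      intro t ht
      have htmem : t ∈ Ioo (-δ) δ := ⟨by linarith [ht.1], ht.2⟩
      have ht0 : t ≠ 0 := ht.1.ne'
      have hψd : HasDerivAt ψ (deriv ψ t) t :=
        ((hψ.differentiableOn (by simp)).differentiableAt
          (hop.mem_nhds htmem)).hasDerivAt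
      have hρd : HasDerivAt ρ (deriv ρ t) t :=
        ((hρ.differentiableOn (by simp)).differentiableAt
          (hop.mem_nhds htmem)).hasDerivAt
      have hR : HasDerivAt (fun t => ψ t * t ^ (m+1) * Real.log t + ρ t * t ^ (m+1))
          (((deriv ψ t * t ^ (m+1) + ψ t * (((m:ℝ)+1) * t ^ m)) * Real.log t
            + (ψ t * t ^ (m+1)) * t⁻¹)
            + (deriv ρ t * t ^ (m+1) + ρ t * (((m:ℝ)+1) * t ^ m))) t := by
        have hpow : HasDerivAt (fun t : ℝ => t ^ (m+1)) (((m:ℝ)+1) * t ^ m) t := by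
          have := hasDerivAt_pow (m+1) t
          simpa using this
        exact ((hψd.mul hpow).mul (Real.hasDerivAt_log ht0)).add (hρd.mul hpow)
      have hloc : φ =ᶠ[nhds t] fun t => ψ t * t ^ (m+1) * Real.log t + ρ t * t ^ (m+1) := by
        filter_upwards [isOpen_Ioo.mem_nhds ht] with s hs
        exact heq s hs
      rw [hloc.deriv_eq, hR.deriv]
      field_simp [hψ'def, hρ'def]
      ring
    have := IH δ hδ (deriv φ) ψ' ρ' hφ' hψ'c hρ'c heq'
    rw [hψ'def] at this
    simp only [zero_mul, mul_zero, zero_add] at this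
    have hm1 : ((m:ℝ) + 1) ≠ 0 := by positivity
    -- this : 0 * deriv ψ 0 + ((m:ℝ)+1) * ψ 0 = 0
    have : ((m:ℝ) + 1) * ψ 0 = 0 := by linarith [this]
    exact (mul_eq_zero.1 this).resolve_left hm1


/-- Let `m ≥ 0`, let `U` be an open neighborhood of `0` in `ℝ²`, and
for each pair `(j1, j2)` of naturals with `j1 + j2 = m` let `g (j1, j2) : U → ℝ`
be smooth.  With `g' c = Σ_{j1+j2=m} g (j1,j2) c * c1^j1 * c2^j2`, the function
`c ↦ g' c * ln ‖c‖` (Euclidean norm), defined for `c ≠ 0` in `U`, extends to a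
`C^m` function on some open neighborhood of `0` if and only if `g (j1,j2) 0 = 0`
for every pair `(j1, j2)` with `j1 + j2 = m`. -/
theorem statement2 (m : ℕ) (U : Set (ℝ × ℝ)) (hU : IsOpen U)
    (h0 : (0 : ℝ × ℝ) ∈ U) (g : ℕ × ℕ → (ℝ × ℝ) → ℝ)
    (hg : ∀ j ∈ Finset.HasAntidiagonal.antidiagonal m, ContDiffOn ℝ (⊤ : ℕ∞) (g j) U) :
    (∃ (V : Set (ℝ × ℝ)) (G : (ℝ × ℝ) → ℝ), IsOpen V ∧ (0 : ℝ × ℝ) ∈ V ∧ V ⊆ U ∧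
      ContDiffOn ℝ ((m : ℕ) : ℕ∞) G V ∧
      ∀ c ∈ V, c ≠ 0 →
        G c = (∑ j ∈ Finset.HasAntidiagonal.antidiagonal m, g j c * c.1 ^ j.1 * c.2 ^ j.2) *
          Real.log (Real.sqrt (c.1 ^ 2 + c.2 ^ 2)))
    ↔ (∀ j ∈ Finset.HasAntidiagonal.antidiagonal m, g j 0 = 0) := by
  constructor
  · rintro ⟨V, G, hVo, hV0, hVU, hGs, hGeq⟩
    -- Step 1: the leading polynomial vanishes on every nonzero direction.
    have main : ∀ v : ℝ × ℝ, v ≠ 0 →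
        ∑ j ∈ Finset.HasAntidiagonal.antidiagonal m, g j 0 * v.1 ^ j.1 * v.2 ^ j.2 = 0 := by
      intro v hv
      set ℓ : ℝ → ℝ × ℝ := fun t => (t * v.1, t * v.2) with hℓ
      have hℓcont : Continuous ℓ := by fun_prop
      have hℓ0 : ℓ 0 = 0 := by simp [hℓ]
      have hpre : IsOpen (ℓ ⁻¹' V) := hVo.preimage hℓcont
      have h0pre : (0:ℝ) ∈ ℓ ⁻¹' V := by
        simp only [mem_preimage, hℓ0]; exact hV0
      obtain ⟨δ, hδ, hball⟩ := Metric.isOpen_iff.1 hpre 0 h0pre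
      have hmem : ∀ t ∈ Ioo (-δ) δ, ℓ t ∈ V := by
        intro t ht
        apply hball
        rw [Metric.mem_ball, Real.dist_eq, sub_zero, abs_lt]
        exact ⟨ht.1, ht.2⟩
      have hℓsm : ContDiff ℝ (⊤ : ℕ∞) ℓ :=
        ContDiff.prodMk (contDiff_id.mul contDiff_const) (contDiff_id.mul contDiff_const)
      have hsv : (0:ℝ) < Real.sqrt (v.1 ^ 2 + v.2 ^ 2) :=
        Real.sqrt_pos.2 (sq2_pos hv)
      have hψ0 := oneD m δ hδ (G ∘ ℓ)
        (fun t => ∑ j ∈ Finset.HasAntidiagonal.antidiagonal m, g j (ℓ t) * v.1 ^ j.1 * v.2 ^ j.2)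
        (fun t => Real.log (Real.sqrt (v.1 ^ 2 + v.2 ^ 2)) *
          ∑ j ∈ Finset.HasAntidiagonal.antidiagonal m, g j (ℓ t) * v.1 ^ j.1 * v.2 ^ j.2)
        ?_ ?_ ?_ ?_
      · simpa only [hℓ0] using hψ0
      · -- smoothness of G ∘ ℓ
        exact hGs.comp ((hℓsm.of_le (by exact_mod_cast le_top)).contDiffOn) (fun t ht => hmem t ht)
      · -- smoothness of ψ
        apply ContDiffOn.sum
        intro j hj
        exact (((hg j hj).comp (hℓsm.contDiffOn) (fun t ht => hVU (hmem t ht))).mul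
          contDiffOn_const).mul contDiffOn_const
      · apply ContDiffOn.mul contDiffOn_const
        apply ContDiffOn.sum
        intro j hj
        exact (((hg j hj).comp (hℓsm.contDiffOn) (fun t ht => hVU (hmem t ht))).mul
          contDiffOn_const).mul contDiffOn_const
      · -- the identity on (0, δ)
        intro t ht
        have htmem : t ∈ Ioo (-δ) δ := ⟨by linarith [ht.1], ht.2⟩
        have hne : ℓ t ≠ 0 := by
          intro hzz
          rw [hℓ, Prod.ext_iff] at hzz
          simp only [Prod.fst_zero, Prod.snd_zero] at hzz
          have h1 : v.1 = 0 := by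
            rcases mul_eq_zero.1 hzz.1 with h | h
            · exact absurd h ht.1.ne'
            · exact h
          have h2 : v.2 = 0 := by
            rcases mul_eq_zero.1 hzz.2 with h | h
            · exact absurd h ht.1.ne'
            · exact h
          exact hv (Prod.ext h1 h2)
        have hGe := hGeq (ℓ t) (hmem t htmem) hne
        have hc1 : (ℓ t).1 = t * v.1 := rfl
        have hc2 : (ℓ t).2 = t * v.2 := rfl
        simp only [Function.comp_apply]
        rw [hGe, hc1, hc2]
        have hsqrt : Real.sqrt ((t * v.1) ^ 2 + (t * v.2) ^ 2)
            = t * Real.sqrt (v.1 ^ 2 + v.2 ^ 2) := by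
          rw [show (t * v.1) ^ 2 + (t * v.2) ^ 2 = t ^ 2 * (v.1 ^ 2 + v.2 ^ 2) by ring,
            Real.sqrt_mul (sq_nonneg t), Real.sqrt_sq ht.1.le]
        rw [hsqrt, Real.log_mul ht.1.ne' hsv.ne']
        have hsum : ∑ j ∈ Finset.HasAntidiagonal.antidiagonal m, g j (ℓ t) * (t * v.1) ^ j.1 * (t * v.2) ^ j.2
            = (∑ j ∈ Finset.HasAntidiagonal.antidiagonal m, g j (ℓ t) * v.1 ^ j.1 * v.2 ^ j.2) * t ^ m := by
          rw [Finset.sum_mul]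
          apply Finset.sum_congr rfl
          intro j hj
          have hjm := Finset.HasAntidiagonal.mem_antidiagonal.1 hj
          rw [mul_pow, mul_pow]
          calc g j (ℓ t) * (t ^ j.1 * v.1 ^ j.1) * (t ^ j.2 * v.2 ^ j.2)
              = g j (ℓ t) * v.1 ^ j.1 * v.2 ^ j.2 * (t ^ j.1 * t ^ j.2) := by ring
            _ = g j (ℓ t) * v.1 ^ j.1 * v.2 ^ j.2 * t ^ m := by rw [← pow_add, hjm]
        rw [hsum]
        ring
    -- Step 2: polynomial identity forces coefficients to vanish.
    intro j hj
    have hjm := Finset.HasAntidiagonal.mem_antidiagonal.1 hj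
    set p : Polynomial ℝ := ∑ i ∈ Finset.range (m + 1),
      Polynomial.C (g (i, m - i) 0) * Polynomial.X ^ i with hp
    have hroot : ∀ x : ℝ, x ≠ 0 → p.eval x = 0 := by
      intro x hx
      have hmain := main (x, 1) (by
        intro hxy
        rw [Prod.ext_iff] at hxy
        exact one_ne_zero hxy.2)
      rw [Finset.Nat.sum_antidiagonal_eq_sum_range_succ_mk] at hmain
      simp only [one_pow, mul_one] at hmain
      rw [hp]
      simp only [Polynomial.eval_finset_sum, Polynomial.eval_mul, Polynomial.eval_C,
        Polynomial.eval_pow, Polynomial.eval_X]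
      exact hmain
    have hp0 : p = 0 := by
      apply Polynomial.eq_zero_of_infinite_isRoot
      apply Set.Infinite.mono (s := {(0:ℝ)}ᶜ)
      · intro x hx
        exact hroot x hx
      · exact Set.Finite.infinite_compl (Set.finite_singleton 0)
    have hcoeff : p.coeff j.1 = g (j.1, m - j.1) 0 := by
      rw [hp]
      rw [Polynomial.finset_sum_coeff]
      have : ∀ i ∈ Finset.range (m + 1),
          (Polynomial.C (g (i, m - i) 0) * Polynomial.X ^ i).coeff j.1
            = if i = j.1 then g (i, m - i) 0 else 0 := by
        intro i _
        rw [Polynomial.coeff_C_mul, Polynomial.coeff_X_pow]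
        by_cases h : j.1 = i
        · simp [h]
        · simp [h, Ne.symm h]
      rw [Finset.sum_congr rfl this, Finset.sum_ite_eq' (Finset.range (m+1)) j.1]
      rw [if_pos (Finset.mem_range.2 (by omega))]
    have hjeq : j = (j.1, m - j.1) := by
      rw [Prod.ext_iff]
      exact ⟨rfl, by omega⟩
    have h2 : g j 0 = g (j.1, m - j.1) 0 := by rw [← hjeq]
    rw [h2, ← hcoeff, hp0]
    simp
  · -- backward direction
    intro hvan
    refine ⟨U, fun c => (∑ j ∈ Finset.HasAntidiagonal.antidiagonal m, g j c * c.1 ^ j.1 * c.2 ^ j.2) *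
      Real.log (sq2 c) / 2, hU, h0, subset_rfl, ?_, ?_⟩
    · have hsum : ContDiffOn ℝ ((m : ℕ) : ℕ∞)
          (fun c => ∑ j ∈ Finset.HasAntidiagonal.antidiagonal m, msf j.1 j.2 0 1 (g j) c) U := by
        apply ContDiffOn.sum
        intro j hj
        have hjm := Finset.HasAntidiagonal.mem_antidiagonal.1 hj
        exact key m j.1 j.2 0 1 1 U (g j) hU h0 le_rfl le_rfl (by omega) (hg j hj)
          (fun _ => hvan j hj)
      apply (hsum.div_const 2).congr
      intro c hc
      simp only [msf, pow_one, pow_zero, div_one]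
      rw [Finset.sum_mul]
    · intro c hc hc0
      have hN := sq2_pos hc0
      have : Real.log (Real.sqrt (c.1 ^ 2 + c.2 ^ 2)) = Real.log (sq2 c) / 2 := by
        rw [Real.log_sqrt (by positivity)]
        rfl
      rw [this]
      ring

end
end

section
/- Define ω0 : ℂ² × ℂ² → ℝ by ω0((u,v),(u',v')) = Im(u·v' − u'·v), and define the map φ from {(z,ζ) ∈ ℂ² : z ≠ 0} to {(z,ζ) ∈ ℂ² : ζ ≠ 0} by φ(z,ζ) = (z²·ζ, z⁻¹). Then: (i) φ is a bijection from {(z,ζ) : z ≠ 0} onto {(z,ζ) : ζ ≠ 0}, with inverse (Z,W) ↦ (W⁻¹, Z·W²); (ii) φ is smooth, and at every point p = (z,ζ) with z ≠ 0 its (real Fréchet) derivative Dφ(p) satisfies ω0(Dφ(p)u, Dφ(p)u') = ω0(u, u') for all u, u' ∈ ℂ²; (iii) q ∘ φ = q on {(z,ζ) : z ≠ 0}, where q(z,ζ) = z·ζ. -/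
/-- The standard symplectic form on `ℝ⁴ ≃ ℂ²` (with `z = x1 + i x2`,
`ζ = ξ2 + i ξ1`): `ω0 ((u,v), (u',v')) = Im (u * v' − u' * v)`. -/
noncomputable def omega0 (u v : ℂ × ℂ) : ℝ := (u.1 * v.2 - v.1 * u.2).im

/-- The map `φ (z, ζ) = (z² ζ, z⁻¹)` on `{z ≠ 0}`. -/
noncomputable def phiMap (p : ℂ × ℂ) : ℂ × ℂ := (p.1 ^ 2 * p.2, p.1⁻¹)

/-- The map `(Z, W) ↦ (W⁻¹, Z W²)` on `{W ≠ 0}`, inverse to `phiMap`. -/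
noncomputable def psiMap (p : ℂ × ℂ) : ℂ × ℂ := (p.2⁻¹, p.1 * p.2 ^ 2)

/-- (i) `φ` is a bijection from `{(z,ζ) : z ≠ 0}` onto
`{(z,ζ) : ζ ≠ 0}` with inverse `ψ`; (ii) `φ` is smooth on `{z ≠ 0}` and its real
Fréchet derivative is symplectic for `ω0` at every point of `{z ≠ 0}`;
(iii) `q ∘ φ = q` on `{z ≠ 0}`, where `q (z, ζ) = z * ζ`. -/
theorem statement10 :
    (∀ p : ℂ × ℂ, p.1 ≠ 0 → (phiMap p).2 ≠ 0 ∧ psiMap (phiMap p) = p) ∧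
    (∀ p : ℂ × ℂ, p.2 ≠ 0 → (psiMap p).1 ≠ 0 ∧ phiMap (psiMap p) = p) ∧
    ContDiffOn ℝ (⊤ : ℕ∞) phiMap {p : ℂ × ℂ | p.1 ≠ 0} ∧
    (∀ p : ℂ × ℂ, p.1 ≠ 0 → ∀ u u' : ℂ × ℂ,
      omega0 (fderiv ℝ phiMap p u) (fderiv ℝ phiMap p u') = omega0 u u') ∧
    (∀ p : ℂ × ℂ, p.1 ≠ 0 → (phiMap p).1 * (phiMap p).2 = p.1 * p.2) := by
  refine ⟨?_, ?_, ?_, ?_, ?_⟩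
  · intro p hp
    refine ⟨by simpa [phiMap] using hp, ?_⟩
    simp only [phiMap, psiMap, inv_inv]
    ext <;> simp <;> field_simp
  · intro p hp
    refine ⟨by simpa [psiMap] using hp, ?_⟩
    simp only [phiMap, psiMap, inv_inv]
    ext <;> simp <;> field_simp
  · have h1 : ContDiffOn ℂ (⊤ : ℕ∞) phiMap {p : ℂ × ℂ | p.1 ≠ 0} := by
      refine ContDiffOn.prodMk ?_ ?_
      · exact ((contDiff_fst.pow 2).mul contDiff_snd).contDiffOn
      · exact contDiff_fst.contDiffOn.inv fun p hp => hp
    exact h1.restrict_scalars ℝ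
  · intro p hp u u'
    have hf : HasFDerivAt (fun p : ℂ × ℂ => p.1) (ContinuousLinearMap.fst ℂ ℂ ℂ) p :=
      hasFDerivAt_fst
    have hs : HasFDerivAt (fun p : ℂ × ℂ => p.2) (ContinuousLinearMap.snd ℂ ℂ ℂ) p :=
      hasFDerivAt_snd
    have h1 := (hf.mul hf).mul hs
    have h2 := ((hasFDerivAt_inv' (𝕜 := ℂ) hp).comp p hf :)
    have h : HasFDerivAt phiMap _ p :=
      (HasFDerivAt.prodMk h1 h2).congr_of_eventuallyEq (by filter_upwards with q; simp [phiMap, sq])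
    rw [(h.restrictScalars ℝ).fderiv]
    simp only [omega0, ContinuousLinearMap.coe_restrictScalars', ContinuousLinearMap.prod_apply,
      ContinuousLinearMap.add_apply, ContinuousLinearMap.smul_apply, ContinuousLinearMap.coe_fst',
      ContinuousLinearMap.coe_snd', ContinuousLinearMap.comp_apply, ContinuousLinearMap.neg_apply,
      ContinuousLinearMap.mulLeftRight_apply, smul_eq_mul, Pi.mul_apply]
    congr 1
    field_simp
    ring
  · intro p hp
    simp only [phiMap]
    field_simp
end
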